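/- Let X ⊆ ℝ^n, let x ∈ ℝ^n be a non-X-singular point, let E be the ∼_X-equivalence class of x, and let v ∈ Str_X(x) be nonzero. Then for every y ∈ L_v(x) ∩ E there exist α, β ∈ (0, ∞] such that the open segment {y + tv : −α < t < β} is contained in E and is maximal among open segments of L_v(x) around y contained in E. Moreover, if α < ∞ then the point y − αv belongs to a ∼_X-class F with F ≠ E and dim Str_X(F) < dim Str_X(E), and likewise if β < ∞ then y + βv belongs to a ∼_X-class F with F ≠ E and dim Str_X(F) < dim Str_X(E). -/

import Mathlib

open FirstOrder

/-- The language of `⟨ℝ,+,<,1⟩`: one constant, one binary function, one binary relation. -/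
def SsLang : Language where
  Functions := fun m => match m with
    | 0 => Unit
    | 2 => Unit
    | _ => Empty
  Relations := fun m => match m with
    | 2 => Unit
    | _ => Empty

noncomputable instance ssStructure : SsLang.Structure ℝ where
  funMap := fun {m} f x =>
    match m, f with
    | 0, _ => (1 : ℝ)
    | 2, _ => x 0 + x 1
  RelMap := fun {m} r x =>
    match m, r with
    | 2, _ => x 0 < x 1

/-- The language of `⟨ℝ,+,<,ℤ⟩`: one binary function, one unary relation, one binary relation. -/
def LsLang : Language where
  Functions := fun m => match m with
    | 2 => Unit
    | _ => Empty
  Relations := fun m => match m with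
    | 1 => Unit
    | 2 => Unit
    | _ => Empty

noncomputable instance lsStructure : LsLang.Structure ℝ where
  funMap := fun {m} f x =>
    match m, f with
    | 2, _ => x 0 + x 1
  RelMap := fun {m} r x =>
    match m, r with
    | 1, _ => ∃ k : ℤ, x 0 = (k : ℝ)
    | 2, _ => x 0 < x 1

/-- `X ⊆ ℝ^n` is definable without parameters in `⟨ℝ,+,<,1⟩`. -/
def SsDefinable {n : ℕ} (X : Set (Fin n → ℝ)) : Prop :=
  Set.Definable (∅ : Set ℝ) SsLang X

/-- `X ⊆ ℝ^n` is definable without parameters in `⟨ℝ,+,<,ℤ⟩`. -/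
def LsDefinable {n : ℕ} (X : Set (Fin n → ℝ)) : Prop :=
  Set.Definable (∅ : Set ℝ) LsLang X

def SsDefinable1 (A : Set ℝ) : Prop := SsDefinable {f : Fin 1 → ℝ | f 0 ∈ A}
def LsDefinable1 (A : Set ℝ) : Prop := LsDefinable {f : Fin 1 → ℝ | f 0 ∈ A}

/-- `v` is an `X`-stratum at `x`: for some `r > 0`,
`B(x,r) ∩ L_v(X ∩ B(x,r)) ⊆ X`.  (The sup norm/metric is the default one on `ι → ℝ`.) -/
def IsStratum {ι : Type} [Fintype ι] (X : Set (ι → ℝ)) (x v : ι → ℝ) : Prop :=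
  ∃ r > (0 : ℝ), ∀ y ∈ Metric.ball x r,
    (∃ z ∈ X ∩ Metric.ball x r, ∃ α : ℝ, y = z + α • v) → y ∈ X

/-- `x` is `X`-singular: `Str_X(x) = {0}`. -/
def IsSingular {ι : Type} [Fintype ι] (X : Set (ι → ℝ)) (x : ι → ℝ) : Prop :=
  ∀ v, IsStratum X x v → v = 0

/-- `x ∼_X y`: some translation of a small ball around `x` identifies `X` near `x` and near `y`. -/
def SimX {n : ℕ} (X : Set (Fin n → ℝ)) (x y : Fin n → ℝ) : Prop :=
  ∃ r > (0 : ℝ), ∀ w : Fin n → ℝ, ‖w‖ < r → (x + w ∈ X ↔ y + w ∈ X)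

/-- the dimension of the subspace `Str_X(x)` of strata at `x`. -/
noncomputable def strDim {n : ℕ} (X : Set (Fin n → ℝ)) (x : Fin n → ℝ) : ℕ :=
  Module.finrank ℝ (Submodule.span ℝ {v | IsStratum X x v})

/-- An interval of `ℝ` all of whose finite endpoints are rational: an order-convex set
whose frontier points (i.e. finite endpoints) are all rational. -/
def IsRatInterval (I : Set ℝ) : Prop :=
  I.OrdConnected ∧ ∀ x ∈ frontier I, ∃ q : ℚ, x = (q : ℝ)

/-! The strata at a point form a subspace: if `X` is invariant along `v` and along `w` on a small
ball, then along any segment in direction `v + w` membership in `X` is locally constant, since a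
small step along `v + w` is a step along `v` followed by one along `w`.

A stratum at `x` is a stratum at every point of its class, and small moves along a stratum stay in
the class, so `{t | y + t • v ∼ x}` is open; `β` and `α` are the distances from `0`
to its boundary on the right and on the left.
At a finite endpoint `p`, every stratum of `p` is a stratum at the nearby points of the segment,
which lie in `E`, so `Str(p) ⊆ Str(E)`; and `v ∉ Str(p)`, since otherwise `p` would be equivalent
to those nearby points. -/

open Metric Filter Topology Set

section LineInvariant

variable {E : Type*} [NormedAddCommGroup E] [NormedSpace ℝ E]

def IsLineInvariantOn (X S : Set E) (v : E) : Prop :=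
  ∀ p ∈ S, ∀ t : ℝ, p + t • v ∈ S → (p ∈ X ↔ p + t • v ∈ X)

variable {X S T : Set E} {v w : E}

lemma IsLineInvariantOn.mono (h : IsLineInvariantOn X S v) (hTS : T ⊆ S) :
    IsLineInvariantOn X T v :=
  fun p hp t ht => h p (hTS hp) t (hTS ht)

lemma isLineInvariantOn_zero : IsLineInvariantOn X S 0 :=
  fun p _ t _ => by rw [smul_zero, add_zero]

lemma IsLineInvariantOn.smul (h : IsLineInvariantOn X S v) (c : ℝ) :
    IsLineInvariantOn X S (c • v) := by
  intro p hp t ht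
  rw [smul_smul] at ht ⊢
  exact h p hp _ ht

lemma IsLineInvariantOn.add (hSo : IsOpen S) (hSc : Convex ℝ S)
    (hv : IsLineInvariantOn X S v) (hw : IsLineInvariantOn X S w) :
    IsLineInvariantOn X S (v + w) := by
  intro p hp t ht
  set L := {s : ℝ | p + s • (v + w) ∈ S}
  have hL : IsPreconnected L := Convex.isPreconnected <|
    (hSc.translate_preimage_right p).linear_preimage (LinearMap.toSpanSingleton ℝ E (v + w))
  have hstep : ∀ a ∈ L, ∀ᶠ b in 𝓝[L] a, (p + a • (v + w) ∈ X ↔ p + b • (v + w) ∈ X) := by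
    intro a ha
    have hcont : Tendsto (fun b : ℝ => p + a • (v + w) + (b - a) • v) (𝓝 a)
        (𝓝 (p + a • (v + w))) :=
      (by fun_prop : Continuous fun b : ℝ => p + a • (v + w) + (b - a) • v).tendsto' _ _
        (by simp)
    filter_upwards [nhdsWithin_le_nhds (hcont (hSo.mem_nhds ha)), self_mem_nhdsWithin]
      with b hb hbL
    have hq : p + a • (v + w) + (b - a) • v + (b - a) • w = p + b • (v + w) := by module
    rw [hv _ ha _ hb, hw _ hb _ (by rwa [hq]), hq]
  simpa using hL.induction₂ _ hstep (fun _ _ _ _ _ _ => Iff.trans) (fun _ _ _ _ => Iff.symm)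
    (show (0 : ℝ) ∈ L by simpa [L] using hp) ht

end LineInvariant

section Stratum

variable {ι : Type} [Fintype ι] {X : Set (ι → ℝ)} {z v w : ι → ℝ}

lemma isStratum_iff : IsStratum X z v ↔ ∃ r > 0, IsLineInvariantOn X (ball z r) v := by
  refine exists_congr fun r => and_congr_right fun _ => ⟨fun h p hp t ht =>
    ⟨fun hX => h _ ht ⟨p, ⟨hX, hp⟩, t, rfl⟩, fun hX => h _ hp ⟨_, ⟨hX, ht⟩, -t, by module⟩⟩, ?_⟩
  rintro h q hq ⟨p, ⟨hX, hp⟩, t, rfl⟩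
  exact (h p hp t hq).1 hX

lemma IsStratum.add (hv : IsStratum X z v) (hw : IsStratum X z w) : IsStratum X z (v + w) := by
  obtain ⟨r, hr, hv⟩ := isStratum_iff.1 hv
  obtain ⟨s, hs, hw⟩ := isStratum_iff.1 hw
  exact isStratum_iff.2 ⟨min r s, lt_min hr hs,
    (hv.mono (ball_subset_ball (min_le_left r s))).add isOpen_ball (convex_ball z _)
      (hw.mono (ball_subset_ball (min_le_right r s)))⟩

def strata (X : Set (ι → ℝ)) (z : ι → ℝ) : Submodule ℝ (ι → ℝ) where
  carrier := {v | IsStratum X z v}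
  add_mem' := IsStratum.add
  zero_mem' := isStratum_iff.2 ⟨1, one_pos, isLineInvariantOn_zero⟩
  smul_mem' c v hv := by
    obtain ⟨r, hr, hv⟩ := isStratum_iff.1 hv
    exact isStratum_iff.2 ⟨r, hr, hv.smul c⟩

lemma mem_strata : v ∈ strata X z ↔ IsStratum X z v := Iff.rfl

lemma IsStratum.eventually_nhds (hv : IsStratum X z v) : ∀ᶠ z' in 𝓝 z, IsStratum X z' v := by
  obtain ⟨r, hr, hv⟩ := isStratum_iff.1 hv
  filter_upwards [ball_mem_nhds z hr] with z' hz'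
  exact isStratum_iff.2 ⟨r - dist z' z, sub_pos.2 hz', hv.mono (ball_subset_ball' (by linarith))⟩

end Stratum

lemma strDim_eq_finrank_strata {n : ℕ} (X : Set (Fin n → ℝ)) (z : Fin n → ℝ) :
    strDim X z = Module.finrank ℝ (strata X z) := by
  rw [strDim, ← (strata X z).span_eq]
  rfl

section SimX

variable {n : ℕ} {X : Set (Fin n → ℝ)} {x y z z' v : Fin n → ℝ}

lemma simX_equivalence : Equivalence (SimX X) where
  refl _ := ⟨1, one_pos, fun _ _ => Iff.rfl⟩
  symm := fun ⟨r, hr, h⟩ => ⟨r, hr, fun w hw => (h w hw).symm⟩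
  trans := fun ⟨r, hr, h⟩ ⟨s, hs, h'⟩ => ⟨min r s, lt_min hr hs, fun w hw =>
    (h w (hw.trans_le (min_le_left _ _))).trans (h' w (hw.trans_le (min_le_right _ _)))⟩

lemma IsStratum.of_simX (h : SimX X z z') (hv : IsStratum X z v) : IsStratum X z' v := by
  obtain ⟨r, hr, h⟩ := h
  obtain ⟨s, hs, hv⟩ := isStratum_iff.1 hv
  refine isStratum_iff.2 ⟨min r s, lt_min hr hs, fun p hp t ht => ?_⟩
  rw [mem_ball_iff_norm, lt_min_iff] at hp ht
  rw [show p + t • v - z' = p - z' + t • v by abel] at ht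
  have hp' := h (p - z') hp.1
  have ht' := h (p - z' + t • v) ht.1
  rw [show z' + (p - z') = p by abel] at hp'
  rw [show z' + (p - z' + t • v) = p + t • v by abel,
    show z + (p - z' + t • v) = z + (p - z') + t • v by abel] at ht'
  rw [← hp', ← ht']
  exact hv _ (by simpa [mem_ball_iff_norm] using hp.2) t
    (by simpa [mem_ball_iff_norm, add_assoc] using ht.2)

lemma IsStratum.eventually_simX_add_smul (hv : IsStratum X z v) :
    ∀ᶠ t in 𝓝 (0 : ℝ), SimX X z (z + t • v) := by
  obtain ⟨r, hr, hv⟩ := isStratum_iff.1 hv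
  have hsmul : Tendsto (fun t : ℝ => t • v) (𝓝 0) (𝓝 0) :=
    (continuous_id.smul continuous_const).tendsto' _ _ (zero_smul ℝ v)
  filter_upwards [hsmul (ball_mem_nhds 0 (half_pos hr))] with t ht
  rw [mem_preimage, mem_ball_zero_iff] at ht
  refine ⟨r / 2, half_pos hr, fun u hu => ?_⟩
  rw [show z + t • v + u = z + u + t • v by abel]
  refine hv _ (by simpa using hu.trans (half_lt_self hr)) t ?_
  rw [mem_ball_iff_norm, add_sub_right_comm, add_sub_cancel_left]
  linarith [norm_add_le u (t • v)]

lemma isOpen_setOf_simX_add_smul (hv : IsStratum X x v) :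
    IsOpen {t : ℝ | SimX X x (y + t • v)} := by
  refine isOpen_iff_mem_nhds.2 fun t ht => ?_
  have hshift : Tendsto (fun s : ℝ => s - t) (𝓝 t) (𝓝 0) := tendsto_sub_nhds_zero_iff.2 tendsto_id
  filter_upwards [hshift.eventually (hv.of_simX ht).eventually_simX_add_smul] with s hs
  rw [show y + t • v + (s - t) • v = y + s • v by module] at hs
  exact simX_equivalence.trans ht hs

lemma not_simX_and_strDim_lt_of_mem_frontier (hv : IsStratum X x v) {b : ℝ}
    (hb : b ∈ frontier {t : ℝ | SimX X x (y + t • v)}) :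
    ¬ SimX X x (y + b • v) ∧ strDim X (y + b • v) < strDim X x := by
  have hnot : ¬ SimX X x (y + b • v) := fun h =>
    hb.2 (by rwa [(isOpen_setOf_simX_add_smul hv).interior_eq])
  have hnear : ∃ᶠ t in 𝓝 b, SimX X x (y + t • v) := mem_closure_iff_frequently.1 hb.1
  have hline : Tendsto (fun t : ℝ => y + t • v) (𝓝 b) (𝓝 (y + b • v)) :=
    (continuous_const.add (continuous_id.smul continuous_const)).tendsto b
  have hlt : strata X (y + b • v) < strata X x := by
    refine lt_of_le_of_ne (fun w hw => ?_) fun heq => ?_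
    · obtain ⟨t, ht, hwt⟩ := (hnear.and_eventually (hline.eventually hw.eventually_nhds)).exists
      exact hwt.of_simX (simX_equivalence.symm ht)
    · have hvb : IsStratum X (y + b • v) v := by rwa [← mem_strata, heq]
      have hshift : Tendsto (fun t : ℝ => t - b) (𝓝 b) (𝓝 0) :=
        tendsto_sub_nhds_zero_iff.2 tendsto_id
      obtain ⟨t, ht, hbt⟩ :=
        (hnear.and_eventually (hshift.eventually hvb.eventually_simX_add_smul)).exists
      rw [show y + b • v + (t - b) • v = y + t • v by module] at hbt
      exact hnot (simX_equivalence.trans ht (simX_equivalence.symm hbt))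
  refine ⟨hnot, ?_⟩
  rw [strDim_eq_finrank_strata, strDim_eq_finrank_strata]
  exact Submodule.finrank_lt_finrank_of_lt hlt

end SimX

section ForwardReach

noncomputable def forwardReach (U : Set ℝ) : EReal :=
  sSup {b : EReal | ∀ t : ℝ, 0 ≤ t → (t : EReal) < b → t ∈ U}

variable {U : Set ℝ}

lemma mem_of_lt_forwardReach {t : ℝ} (ht0 : 0 ≤ t) (ht : (t : EReal) < forwardReach U) :
    t ∈ U := by
  obtain ⟨b, hb, htb⟩ := lt_sSup_iff.1 ht
  exact hb t ht0 htb

lemma le_forwardReach {b : EReal} (hb : ∀ t : ℝ, 0 ≤ t → (t : EReal) < b → t ∈ U) :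
    b ≤ forwardReach U :=
  le_sSup hb

lemma coe_le_forwardReach {b : ℝ} (hb : Ico 0 b ⊆ U) : (b : EReal) ≤ forwardReach U :=
  le_forwardReach fun t ht0 htb => hb ⟨ht0, by exact_mod_cast htb⟩

lemma forwardReach_pos (hU : IsOpen U) (h0 : 0 ∈ U) : 0 < forwardReach U := by
  obtain ⟨ε, hε, hεU⟩ := exists_Ico_subset_of_mem_nhds (hU.mem_nhds h0) ⟨1, one_pos⟩
  exact (EReal.coe_pos.2 hε).trans_le (coe_le_forwardReach hεU)

lemma mem_frontier_of_forwardReach_eq (hU : IsOpen U) (h0 : 0 ∈ U) {b : ℝ}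
    (hb : forwardReach U = b) : b ∈ frontier U := by
  have hb0 : 0 < b := EReal.coe_pos.1 (hb ▸ forwardReach_pos hU h0)
  have hIco : Ico 0 b ⊆ U := fun t ht =>
    mem_of_lt_forwardReach ht.1 (hb ▸ EReal.coe_lt_coe_iff.2 ht.2)
  refine ⟨closure_mono hIco (by rw [closure_Ico hb0.ne]; exact right_mem_Icc.2 hb0.le),
    fun hbU => ?_⟩
  rw [hU.interior_eq] at hbU
  obtain ⟨c, hbc, hc⟩ := exists_Ico_subset_of_mem_nhds (hU.mem_nhds hbU) ⟨b + 1, by linarith⟩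
  have hcb : (c : EReal) ≤ b :=
    hb ▸ coe_le_forwardReach (Ico_union_Ico_eq_Ico hb0.le hbc.le ▸ union_subset hIco hc)
  exact (EReal.coe_le_coe_iff.1 hcb).not_gt hbc

lemma forall_Ioo_iff {P : ℝ → Prop} {α β : EReal} (hα : 0 < α) (hβ : 0 < β) :
    (∀ t : ℝ, -α < t → (t : EReal) < β → P t) ↔
      (∀ t : ℝ, 0 ≤ t → (t : EReal) < α → P (-t)) ∧
        (∀ t : ℝ, 0 ≤ t → (t : EReal) < β → P t) := by
  refine ⟨fun h => ⟨fun t ht0 ht => h (-t) ?_ ?_, fun t ht0 ht => h t ?_ ht⟩, ?_⟩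
  · rwa [EReal.coe_neg, EReal.neg_lt_neg_iff]
  · exact (EReal.coe_nonpos.2 (neg_nonpos.2 ht0)).trans_lt hβ
  · exact (EReal.neg_lt_comm.1 (by rwa [neg_zero])).trans_le (EReal.coe_nonneg.2 ht0)
  · rintro ⟨hneg, hpos⟩ t htα htβ
    rcases le_or_gt 0 t with ht | ht
    · exact hpos t ht htβ
    · simpa using hneg (-t) (by linarith) (by rwa [EReal.coe_neg, EReal.neg_lt_comm])

end ForwardReach

theorem stmt14_general (n : ℕ) (X : Set (Fin n → ℝ)) (x v : Fin n → ℝ)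
    (hvs : IsStratum X x v)
    (y : Fin n → ℝ) (hyE : SimX X x y) :
    ∃ α β : EReal, 0 < α ∧ 0 < β ∧
      (∀ t : ℝ, -α < (t : EReal) → (t : EReal) < β → SimX X x (y + t • v)) ∧
      (∀ α' β' : EReal, 0 < α' → 0 < β' →
        (∀ t : ℝ, -α' < (t : EReal) → (t : EReal) < β' → SimX X x (y + t • v)) →
        α' ≤ α ∧ β' ≤ β) ∧
      (∀ a : ℝ, α = (a : EReal) →
        ¬ SimX X x (y - a • v) ∧ strDim X (y - a • v) < strDim X x) ∧
      (∀ b : ℝ, β = (b : EReal) →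
        ¬ SimX X x (y + b • v) ∧ strDim X (y + b • v) < strDim X x) := by
  have hvs' : IsStratum X x (-v) := (strata X x).neg_mem hvs
  have h0 : ∀ u, (0 : ℝ) ∈ {t : ℝ | SimX X x (y + t • u)} := fun u => by simpa using hyE
  have hU := isOpen_setOf_simX_add_smul (y := y) hvs
  have hU' := isOpen_setOf_simX_add_smul (y := y) hvs'
  have hline : ∀ t : ℝ, y + t • -v = y + (-t) • v := fun t => by rw [smul_neg, neg_smul]
  have hα := forwardReach_pos hU' (h0 _)
  have hβ := forwardReach_pos hU (h0 _)
  refine ⟨_, _, hα, hβ, fun t htα htβ => ?_, fun α' β' hα' hβ' h => ?_, fun a ha => ?_,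
    fun b hb => not_simX_and_strDim_lt_of_mem_frontier hvs (mem_frontier_of_forwardReach_eq hU (h0 _) hb)⟩
  · refine (forall_Ioo_iff (P := fun t => SimX X x (y + t • v)) hα hβ).2
      ⟨fun t ht0 ht => ?_, fun t ht0 ht => mem_of_lt_forwardReach ht0 ht⟩ t htα htβ
    simpa only [mem_ofPred_eq, hline] using mem_of_lt_forwardReach ht0 ht
  · obtain ⟨hneg, hpos⟩ := (forall_Ioo_iff hα' hβ').1 h
    refine ⟨le_forwardReach fun t ht0 ht => ?_, le_forwardReach hpos⟩
    simpa only [mem_ofPred_eq, hline] using hneg t ht0 ht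
  · simpa only [smul_neg, ← sub_eq_add_neg] using
      not_simX_and_strDim_lt_of_mem_frontier hvs' (mem_frontier_of_forwardReach_eq hU' (h0 _) ha)

/-- Around any point `y` of `L_v(x) ∩ E` (where `E` is the class of a nonsingular point `x`
and `v ∈ Str(x)` is nonzero) there is a maximal open segment of `L_v(x)` contained in `E`,
and each finite endpoint of this segment lies in a class `F ≠ E` with
`dim Str(F) < dim Str(E)`. -/
theorem stmt14 (n : ℕ) (X : Set (Fin n → ℝ)) (x v : Fin n → ℝ)
    (hns : ¬ IsSingular X x) (hv : v ≠ 0) (hvs : IsStratum X x v)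
    (y : Fin n → ℝ) (hyL : ∃ t : ℝ, y = x + t • v) (hyE : SimX X x y) :
    ∃ α β : EReal, 0 < α ∧ 0 < β ∧
      (∀ t : ℝ, -α < (t : EReal) → (t : EReal) < β → SimX X x (y + t • v)) ∧
      (∀ α' β' : EReal, 0 < α' → 0 < β' →
        (∀ t : ℝ, -α' < (t : EReal) → (t : EReal) < β' → SimX X x (y + t • v)) →
        α' ≤ α ∧ β' ≤ β) ∧
      (∀ a : ℝ, α = (a : EReal) →
        ¬ SimX X x (y - a • v) ∧ strDim X (y - a • v) < strDim X x) ∧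
      (∀ b : ℝ, β = (b : EReal) →
        ¬ SimX X x (y + b • v) ∧ strDim X (y + b • v) < strDim X x) :=
  stmt14_general n X x v hvs y hyE
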